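/- Assume (A₁) (causality) and (A₂) (strong controllability). Then the Schur complement S = H − K L⁻¹ Kᵗ of L in Λ and the matrix Λ itself are invertible, and Λ⁻¹ is the block matrix [[L⁻¹ + L⁻¹KᵗS⁻¹KL⁻¹, −L⁻¹KᵗS⁻¹], [−S⁻¹KL⁻¹, S⁻¹]]. -/

import Mathlib

open MeasureTheory ProbabilityTheory Filter Matrix Finset
open scoped Topology Kronecker

noncomputable section

abbrev Mat (d : ℕ) := Matrix (Fin d) (Fin d) ℝ

/-- The index set for the regression vector `Φ_n`:
`p` blocks of size `d` (past outputs) followed by `q` blocks of size `d` (past inputs). -/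
abbrev RegIdx (d p q : ℕ) := (Fin p × Fin d) ⊕ (Fin q × Fin d)

/-- The matrix polynomial `B(z) = I + B₁ z + ⋯ + B_q z^q`, over `ℂ`. -/
def Bpoly {d : ℕ} (B : ℕ → Mat d) (q : ℕ) (z : ℂ) : Matrix (Fin d) (Fin d) ℂ :=
  1 + ∑ j ∈ Finset.Icc 1 q, z ^ j • (B j).map (fun r => (r : ℂ))

/-- Causality assumption (A₁): `det B(z) ≠ 0` for all `|z| ≤ 1`. -/
def Causal {d : ℕ} (B : ℕ → Mat d) (q : ℕ) : Prop :=
  ∀ z : ℂ, ‖z‖ ≤ 1 → (Bpoly B q z).det ≠ 0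

/-- `P` is the coefficient sequence of the formal power series
`B(z)⁻¹ (A(z) - I) = ∑_{k ≥ 1} P_k z^k`, expressed through the coefficient
identities of `B(z) · (∑ P_k z^k) = A(z) - I`, where `A(z) = I - ∑_{k=1}^p A_k z^k`
is encoded by `A : ℕ → Mat d` supported on `{1, …, p}` (so the coefficient of
`A(z) - I` at `z^k`, `k ≥ 1`, is `-(A k)`). The convention `P_m = 0` for `m ≤ 0`
is realized by `P 0 = 0` together with truncated subtraction on `ℕ`. -/
def IsPSeq {d : ℕ} (A B : ℕ → Mat d) (q : ℕ) (P : ℕ → Mat d) : Prop :=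
  P 0 = 0 ∧ ∀ k, 1 ≤ k → P k + ∑ j ∈ Finset.Icc 1 q, B j * P (k - j) = -(A k)

/-- The `dq × dq` matrix `Π` whose `(i,j)` block (`1 ≤ i, j ≤ q`) is `P_{p+j-i}`. -/
def PiMat {d : ℕ} (P : ℕ → Mat d) (p q : ℕ) :
    Matrix (Fin q × Fin d) (Fin q × Fin d) ℝ :=
  fun ia jb => P (p + (jb.1 : ℕ) - (ia.1 : ℕ)) ia.2 jb.2

/-- `H_i = ∑_{k=i}^∞ P_k Γ P_{k-i+1}ᵗ`. -/
def Hmat {d : ℕ} (P : ℕ → Mat d) (Γ : Mat d) (i : ℕ) : Mat d :=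
  ∑' m : ℕ, P (i + m) * Γ * (P (m + 1))ᵀ

/-- The `dq × dq` matrix `H` with `(i,j)` block `H_{j-i+1}` if `j ≥ i` and `H_{i-j+1}ᵗ` else. -/
def Hblk {d : ℕ} (P : ℕ → Mat d) (Γ : Mat d) (q : ℕ) :
    Matrix (Fin q × Fin d) (Fin q × Fin d) ℝ :=
  fun ia jb =>
    if (ia.1 : ℕ) ≤ (jb.1 : ℕ) then Hmat P Γ ((jb.1 : ℕ) - (ia.1 : ℕ) + 1) ia.2 jb.2
    else Hmat P Γ ((ia.1 : ℕ) - (jb.1 : ℕ) + 1) jb.2 ia.2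

/-- The `dq × dp` matrix `K` with `(i,j)` block `P_{j-i} Γ` if `j > i` and `0` else. -/
def Kblk {d : ℕ} (P : ℕ → Mat d) (Γ : Mat d) (p q : ℕ) :
    Matrix (Fin q × Fin d) (Fin p × Fin d) ℝ :=
  fun ia jb =>
    if (ia.1 : ℕ) < (jb.1 : ℕ) then (P ((jb.1 : ℕ) - (ia.1 : ℕ)) * Γ) ia.2 jb.2 else 0

/-- The `dp × dp` block-diagonal matrix `L = diag(Γ, …, Γ)`. -/
def Lblk {d : ℕ} (Γ : Mat d) (p : ℕ) : Matrix (Fin p × Fin d) (Fin p × Fin d) ℝ :=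
  fun ia jb => if ia.1 = jb.1 then Γ ia.2 jb.2 else 0

/-- The limiting matrix `Λ = [[L, Kᵗ], [K, H]]`. -/
def Lam {d : ℕ} (P : ℕ → Mat d) (Γ : Mat d) (p q : ℕ) :
    Matrix (RegIdx d p q) (RegIdx d p q) ℝ :=
  Matrix.fromBlocks (Lblk Γ p) (Kblk P Γ p q)ᵀ (Kblk P Γ p q) (Hblk P Γ q)

/-- The Schur complement `S = H - K L⁻¹ Kᵗ` of `L` in `Λ`. -/
def SchurS {d : ℕ} (P : ℕ → Mat d) (Γ : Mat d) (p q : ℕ) :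
    Matrix (Fin q × Fin d) (Fin q × Fin d) ℝ :=
  Hblk P Γ q - Kblk P Γ p q * (Lblk Γ p)⁻¹ * (Kblk P Γ p q)ᵀ

/-- Squared Euclidean norm of a finitely indexed vector. -/
def nrmSq {ι : Type*} [Fintype ι] (u : ι → ℝ) : ℝ := ∑ i, (u i) ^ 2

/-- Euclidean norm of a finitely indexed vector. -/
def nrm {ι : Type*} [Fintype ι] (u : ι → ℝ) : ℝ := Real.sqrt (nrmSq u)

/-- Squared Frobenius norm of a matrix. -/
def frobSq {ι κ : Type*} [Fintype ι] [Fintype κ] (M : Matrix ι κ ℝ) : ℝ :=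
  ∑ i, ∑ j, (M i j) ^ 2

/-- Frobenius norm of a matrix. -/
def frobNrm {ι κ : Type*} [Fintype ι] [Fintype κ] (M : Matrix ι κ ℝ) : ℝ :=
  Real.sqrt (frobSq M)

/-- The set of (real) eigenvalues of a matrix. -/
def eigSet {ι : Type*} [Fintype ι] (M : Matrix ι ι ℝ) : Set ℝ :=
  {r : ℝ | ∃ v : ι → ℝ, v ≠ 0 ∧ M.mulVec v = r • v}

/-- Largest eigenvalue. -/
def lamMax {ι : Type*} [Fintype ι] (M : Matrix ι ι ℝ) : ℝ := sSup (eigSet M)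

/-- Smallest eigenvalue. -/
def lamMin {ι : Type*} [Fintype ι] (M : Matrix ι ι ℝ) : ℝ := sInf (eigSet M)

variable {Ω : Type*}

/-- The regression vector `Φ_n = (X_n, …, X_{n-p+1}, U_{n-1}, …, U_{n-q})`
(with the convention that negative time indices are truncated at `0`). -/
def Phi {d : ℕ} (p q : ℕ) (X U : ℕ → Ω → Fin d → ℝ) (n : ℕ) (ω : Ω) :
    RegIdx d p q → ℝ :=
  Sum.elim (fun ib => X (n - (ib.1 : ℕ)) ω ib.2) (fun jb => U (n - 1 - (jb.1 : ℕ)) ω jb.2)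

/-- `S_n = ∑_{k=0}^n Φ_k Φ_kᵗ + I`. -/
def SLS {d : ℕ} (p q : ℕ) (X U : ℕ → Ω → Fin d → ℝ) (n : ℕ) (ω : Ω) :
    Matrix (RegIdx d p q) (RegIdx d p q) ℝ :=
  (∑ k ∈ Finset.range (n + 1), vecMulVec (Phi p q X U k ω) (Phi p q X U k ω)) + 1

/-- `s_n = ∑_{k=0}^n ‖Φ_k‖²`. -/
def sPhi {d : ℕ} (p q : ℕ) (X U : ℕ → Ω → Fin d → ℝ) (n : ℕ) (ω : Ω) : ℝ :=
  ∑ k ∈ Finset.range (n + 1), nrmSq (Phi p q X U k ω)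

/-- The weights `a_n = (log s_n)^{-(1+γ)}`, with `a_n = 1` when `log s_n ≤ 1`. -/
def wt {d : ℕ} (p q : ℕ) (X U : ℕ → Ω → Fin d → ℝ) (γ : ℝ) (n : ℕ) (ω : Ω) : ℝ :=
  if Real.log (sPhi p q X U n ω) ≤ 1 then 1
  else Real.log (sPhi p q X U n ω) ^ (-(1 + γ))

/-- `S_n(a) = ∑_{k=0}^n a_k Φ_k Φ_kᵗ + I`. -/
def SWLS {d : ℕ} (p q : ℕ) (X U : ℕ → Ω → Fin d → ℝ) (γ : ℝ) (n : ℕ) (ω : Ω) :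
    Matrix (RegIdx d p q) (RegIdx d p q) ℝ :=
  (∑ k ∈ Finset.range (n + 1),
    wt p q X U γ k ω • vecMulVec (Phi p q X U k ω) (Phi p q X U k ω)) + 1

/-- Average cost matrix `C_n = n⁻¹ ∑_{k=1}^n (X_k - x_k)(X_k - x_k)ᵗ`. -/
def Cmat {d : ℕ} (X xref : ℕ → Ω → Fin d → ℝ) (n : ℕ) (ω : Ω) : Mat d :=
  (n : ℝ)⁻¹ • ∑ k ∈ Finset.Icc 1 n, vecMulVec (X k ω - xref k ω) (X k ω - xref k ω)

/-- Empirical covariance `Γ_n = n⁻¹ ∑_{k=1}^n ε_k ε_kᵗ`. -/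
def Gmat {d : ℕ} (ε : ℕ → Ω → Fin d → ℝ) (n : ℕ) (ω : Ω) : Mat d :=
  (n : ℝ)⁻¹ • ∑ k ∈ Finset.Icc 1 n, vecMulVec (ε k ω) (ε k ω)

/-!
By (A₁) the matrix polynomial `B(z)` is invertible on a disk of radius `ρ > 1`, so
`z ↦ B(z)⁻¹ (A(z) - I)` is holomorphic there; its Taylor coefficients solve the same
recurrence as the `P_k`, hence equal them, and the Cauchy estimates make `P_k` decay like `ρ⁻ᵏ`.

Let `X_t` be the block column `(P_t, P_{t-1}, …, P_{t-q+1})`. Then `H = ∑_{t ≥ 0} X_t Γ X_tᵀ`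
and `K L⁻¹ Kᵀ = ∑_{t < p} X_t Γ X_tᵀ`, so `S = ∑_{t ≥ p} X_t Γ X_tᵀ`. A vector `v` with
`vᵀ S v = 0` satisfies `vᵀ X_t = 0` for all `t ≥ p`; for `p ≤ t < p + q` these are the block
columns of `Π`, so (A₂) forces `v = 0` and `S` is positive definite. The rest is the Schur
complement formula for the block matrix `Λ`, whose corner `L = diag(Γ, …, Γ)` is invertible.
-/

theorem eq_zero_of_hasSum_pow_smul {E : Type*} [NormedAddCommGroup E] [NormedSpace ℂ E]
    {e : ℕ → E} {ρ : ℝ} (hρ : 0 < ρ)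
    (h : ∀ z : ℂ, ‖z‖ < ρ → HasSum (fun n => z ^ n • e n) 0) : e = 0 := by
  let r : NNReal := ⟨ρ / 2, by positivity⟩
  have hr : (r : ℝ) < ρ := by change ρ / 2 < ρ; linarith
  let p : FormalMultilinearSeries ℂ ℂ E :=
    fun n => ContinuousMultilinearMap.mkPiRing ℂ (Fin n) (e n)
  have hp : ∀ (n : ℕ) (z : ℂ), p n (fun _ => z) = z ^ n • e n := by simp [p]
  have hrad : (r : ENNReal) ≤ p.radius := by
    refine p.le_radius_of_tendsto (l := 0) ?_
    have := (h r (by simpa using hr)).summable.tendsto_atTop_zero.norm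
    simpa [p, norm_smul, mul_comm] using this
  have hball : HasFPowerSeriesOnBall 0 p 0 r := by
    refine ⟨hrad, ENNReal.coe_pos.mpr (NNReal.coe_pos.mp (half_pos hρ)), fun {y} hy => ?_⟩
    simp only [hp, Pi.zero_apply]
    exact h y (lt_trans (by simpa using hy) hr)
  funext n
  simpa [hp] using congrArg (fun q : FormalMultilinearSeries ℂ ℂ E => q n (fun _ => 1))
    hball.hasFPowerSeriesAt.eq_zero

theorem eq_of_sum_range_mul_eq {R : Type*} [Ring R] {b x y : ℕ → R} (hb : IsUnit (b 0))
    (h : ∀ n, ∑ k ∈ range (n + 1), b k * x (n - k) = ∑ k ∈ range (n + 1), b k * y (n - k)) :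
    x = y := by
  funext n
  induction n using Nat.strong_induction_on with
  | _ n ih =>
    have hn := h n
    have htail : ∑ k ∈ range n, b (k + 1) * x (n - (k + 1))
        = ∑ k ∈ range n, b (k + 1) * y (n - (k + 1)) :=
      sum_congr rfl fun k hk => by rw [ih _ (by simp at hk; omega)]
    rw [sum_range_succ', sum_range_succ', htail, add_left_cancel_iff, Nat.sub_zero] at hn
    exact hb.mul_left_cancel hn

section BanachAlgebra

variable {R : Type*} [NormedRing R]

theorem exists_one_lt_forall_norm_le_isUnit [CompleteSpace R] {f : ℂ → R} (hf : Continuous f)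
    (h : ∀ z : ℂ, ‖z‖ ≤ 1 → IsUnit (f z)) :
    ∃ ρ : ℝ, 1 < ρ ∧ ∀ z : ℂ, ‖z‖ ≤ ρ → IsUnit (f z) := by
  obtain ⟨δ, hδ, hsub⟩ := (isCompact_closedBall (0 : ℂ) 1).exists_cthickening_subset_open
    (Units.isOpen.preimage hf) fun z hz => h z (by simpa using hz)
  refine ⟨1 + δ, by linarith, fun z hz => hsub ?_⟩
  rw [cthickening_closedBall hδ.le zero_le_one]
  simpa [add_comm] using hz

variable [NormedAlgebra ℂ R]

theorem hasSum_pow_smul_sum_range_mul [CompleteSpace R] {b y : ℕ → R} {z : ℂ}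
    (hb : Summable fun n => ‖z ^ n • b n‖) (hy : Summable fun n => ‖z ^ n • y n‖) :
    HasSum (fun n => z ^ n • ∑ k ∈ range (n + 1), b k * y (n - k))
      ((∑' n, z ^ n • b n) * ∑' n, z ^ n • y n) := by
  have hterm : ∀ n, z ^ n • ∑ k ∈ range (n + 1), b k * y (n - k)
      = ∑ k ∈ range (n + 1), (z ^ k • b k) * (z ^ (n - k) • y (n - k)) := fun n => by
    rw [Finset.smul_sum]
    refine sum_congr rfl fun k hk => ?_
    rw [smul_mul_smul_comm, ← pow_add, Nat.add_sub_cancel' (Nat.lt_succ_iff.mp (mem_range.mp hk))]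
  simp_rw [hterm]
  rw [tsum_mul_tsum_eq_tsum_sum_range_of_summable_norm hb hy]
  exact (summable_norm_sum_mul_range_of_summable_norm hb hy).of_norm.hasSum

theorem exists_taylor_coeff_of_differentiableOn {E : Type*} [NormedAddCommGroup E]
    [NormedSpace ℂ E] [CompleteSpace E] {f : ℂ → E} {ρ : ℝ} (hρ : 1 < ρ)
    (hf : DifferentiableOn ℂ f (Metric.closedBall 0 ρ)) :
    ∃ y : ℕ → E, (∀ z : ℂ, ‖z‖ < 1 → HasSum (fun n => z ^ n • y n) (f z)) ∧
      (∀ z : ℂ, ‖z‖ < 1 → Summable fun n => ‖z ^ n • y n‖) ∧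
      ∃ M, ∀ n, ‖y n‖ ≤ M * ρ⁻¹ ^ n := by
  let ρ' : NNReal := ⟨ρ, by linarith⟩
  have hps := hf.hasFPowerSeriesOnBall (R := ρ') (by change (0 : ℝ) < ρ; linarith)
  refine ⟨(cauchyPowerSeries f 0 ρ').coeff, fun z hz => ?_, fun z hz => ?_, ⟨_, fun n =>
    (cauchyPowerSeries f 0 ρ').norm_apply_eq_norm_coef.symm.trans_le <|
      (norm_cauchyPowerSeries_le f 0 ρ n).trans_eq (by rw [abs_of_pos (by linarith)])⟩⟩
  · simpa [FormalMultilinearSeries.apply_eq_pow_smul_coeff] using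
      hps.hasSum (y := z) (by simpa using (hz.trans hρ : ‖z‖ < (ρ' : ℝ)))
  · have hz' : (‖z‖₊ : ENNReal) < ρ' := by
      rw [ENNReal.coe_lt_coe, ← NNReal.coe_lt_coe, coe_nnnorm]
      exact hz.trans hρ
    simpa [norm_smul, FormalMultilinearSeries.norm_apply_eq_norm_coef, mul_comm] using
      (cauchyPowerSeries f 0 ρ').summable_norm_mul_pow (hz'.trans_le hps.r_le)

theorem exists_pow_bound_of_sum_range_mul_eq [CompleteSpace R] {b g x : ℕ → R} {N : ℕ}
    (hb : ∀ n, N < n → b n = 0) (hg : ∀ n, N < n → g n = 0)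
    (hunit : ∀ z : ℂ, ‖z‖ ≤ 1 → IsUnit (∑ n ∈ range (N + 1), z ^ n • b n))
    (hx : ∀ n, ∑ k ∈ range (n + 1), b k * x (n - k) = g n) :
    ∃ C r : ℝ, 0 ≤ r ∧ r < 1 ∧ ∀ n, ‖x n‖ ≤ C * r ^ n := by
  set β : ℂ → R := fun z => ∑ n ∈ range (N + 1), z ^ n • b n
  set γ : ℂ → R := fun z => ∑ n ∈ range (N + 1), z ^ n • g n
  have hβ : Differentiable ℂ β := by fun_prop
  have hγ : Differentiable ℂ γ := by fun_prop
  have hfin : ∀ {c : ℕ → R}, (∀ n, N < n → c n = 0) →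
      ∀ (z : ℂ), ∀ n ∉ range (N + 1), z ^ n • c n = 0 :=
    fun hc z n hn => by rw [hc n (by simpa [Nat.lt_succ_iff] using hn), smul_zero]
  obtain ⟨ρ, hρ1, hρ⟩ := exists_one_lt_forall_norm_le_isUnit hβ.continuous hunit
  have hf : DifferentiableOn ℂ (fun z => Ring.inverse (β z) * γ z) (Metric.closedBall 0 ρ) :=
    (hβ.differentiableOn.inverse fun z hz => hρ z (by simpa using hz)).mul hγ.differentiableOn
  obtain ⟨y, hy_sum, hy_norm, M, hM⟩ := exists_taylor_coeff_of_differentiableOn hρ1 hf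
  -- Comparing power series in `β · (β⁻¹ γ) = γ` on the unit disk: the Taylor coefficients `y`
  -- of `β⁻¹ γ` also solve `b ⋆ y = g`.
  have hy_conv : ∀ n, ∑ k ∈ range (n + 1), b k * y (n - k) = g n := by
    have := eq_zero_of_hasSum_pow_smul (e := fun n => ∑ k ∈ range (n + 1), b k * y (n - k) - g n)
      one_pos fun z hz => by
        have hβz : HasSum (fun n => z ^ n • b n) (β z) := hasSum_sum_of_ne_finset_zero (hfin hb z)
        have hγz : HasSum (fun n => z ^ n • g n) (γ z) := hasSum_sum_of_ne_finset_zero (hfin hg z)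
        have hprod := hasSum_pow_smul_sum_range_mul
          (summable_of_ne_finset_zero (s := range (N + 1)) fun n hn => by
            rw [hfin hb z n hn, norm_zero]) (hy_norm z hz)
        rw [hβz.tsum_eq, (hy_sum z hz).tsum_eq,
          Ring.mul_inverse_cancel_left _ _ (hρ z (by linarith))] at hprod
        simpa [smul_sub] using hprod.sub hγz
    exact fun n => sub_eq_zero.mp (congrFun this n)
  have hxy : x = y := eq_of_sum_range_mul_eq (by simpa [sum_range_succ'] using hunit 0 (by simp))
    fun n => (hx n).trans (hy_conv n).symm
  exact ⟨M, ρ⁻¹, by positivity, inv_lt_one_of_one_lt₀ hρ1, hxy ▸ hM⟩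

end BanachAlgebra

theorem sum_range_ite_eq_add_sum_Icc {M : Type*} [AddCommMonoid M] {q N : ℕ} (hqN : q ≤ N)
    (f g : ℕ → M) :
    ∑ k ∈ range (N + 1), (if k = 0 then g k else if k ≤ q then f k else 0)
      = g 0 + ∑ k ∈ Icc 1 q, f k := by
  rw [← sum_subset (s₁ := insert 0 (Icc 1 q))
    (fun k hk => by rw [mem_insert, mem_Icc] at hk; rw [mem_range]; omega)
    (fun k _ hk => by rw [mem_insert, mem_Icc] at hk; rw [if_neg (by omega), if_neg (by omega)]),
    sum_insert (by simp), if_pos rfl]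
  exact congrArg _ (sum_congr rfl fun k hk => by simp at hk; simp [hk.2, show k ≠ 0 by omega])

theorem sum_range_ite_mul_eq_add_sum_Icc {R : Type*} [Semiring R] (β x : ℕ → R) (hx0 : x 0 = 0)
    (q n : ℕ) :
    ∑ k ∈ range (n + 1), (if k = 0 then 1 else if k ≤ q then β k else 0) * x (n - k)
      = x n + ∑ k ∈ Icc 1 q, β k * x (n - k) := by
  rw [sum_subset (range_subset_range.mpr (by omega : n + 1 ≤ n + q + 1)) fun k _ hk => by
    simp at hk; simp [Nat.sub_eq_zero_of_le hk.le, hx0]]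
  simp only [ite_mul, one_mul, zero_mul]
  rw [sum_range_ite_eq_add_sum_Icc (Nat.le_add_left q n) (fun k => β k * x (n - k))
    (fun k => x (n - k)), Nat.sub_zero]

theorem HasSum.dotProduct_mulVec {ι m n R : Type*} [Fintype m] [Fintype n]
    [NonUnitalNonAssocSemiring R] [TopologicalSpace R] [IsTopologicalSemiring R]
    {f : ι → Matrix m n R} {M : Matrix m n R} (hf : HasSum f M) (v : m → R) (w : n → R) :
    HasSum (fun t => v ⬝ᵥ f t *ᵥ w) (v ⬝ᵥ M *ᵥ w) := by
  simp only [dotProduct, Matrix.mulVec]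
  exact hasSum_sum fun i _ => (hasSum_sum fun j _ =>
    (Pi.hasSum.mp (Pi.hasSum.mp hf i) j).mul_right (w j)).mul_left (v i)

namespace Matrix

theorem tsum_apply {ι m n R : Type*} [AddCommMonoid R] [TopologicalSpace R] [T2Space R]
    {f : ι → Matrix m n R} (hf : Summable f) (i : m) (j : n) :
    (∑' t, f t) i j = ∑' t, f t i j :=
  (congrFun (_root_.tsum_apply hf) j).trans (_root_.tsum_apply (Pi.summable.mp hf i))

theorem posDef_tsum_mul_mul_transpose {ι κ : Type*} [Fintype ι] [Fintype κ]
    {τ : Type*} {Γ : Matrix κ κ ℝ} (hΓ : Γ.PosDef) {X : τ → Matrix ι κ ℝ}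
    (hX : Summable fun m => X m * Γ * (X m)ᵀ) (hinj : ∀ v : ι → ℝ, (∀ m, v ᵥ* X m = 0) → v = 0) :
    (∑' m, X m * Γ * (X m)ᵀ).PosDef := by
  have hΓT : Γᵀ = Γ := by simpa using hΓ.isHermitian.eq
  refine posDef_iff_dotProduct_mulVec.mpr ⟨?_, fun v hv => ?_⟩
  · rw [IsHermitian, conjTranspose_eq_transpose_of_trivial, transpose_tsum]
    refine tsum_congr fun m => ?_
    rw [transpose_mul, transpose_mul, transpose_transpose, hΓT, Matrix.mul_assoc]
  have hterm : ∀ m, v ⬝ᵥ (X m * Γ * (X m)ᵀ) *ᵥ v = (v ᵥ* X m) ⬝ᵥ Γ *ᵥ (v ᵥ* X m) := fun m => by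
    rw [← mulVec_mulVec, ← mulVec_mulVec, dotProduct_mulVec, mulVec_transpose]
  have hsum : HasSum (fun m => (v ᵥ* X m) ⬝ᵥ Γ *ᵥ (v ᵥ* X m))
      (v ⬝ᵥ (∑' m, X m * Γ * (X m)ᵀ) *ᵥ v) := by
    simpa only [hterm] using hX.hasSum.dotProduct_mulVec v v
  obtain ⟨m, hm⟩ : ∃ m, v ᵥ* X m ≠ 0 := by
    by_contra! h
    exact hv (hinj v h)
  rw [star_trivial, ← hsum.tsum_eq]
  exact hsum.summable.tsum_pos (fun m => by simpa using hΓ.posSemidef.dotProduct_mulVec_nonneg _) m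
    (by simpa using hΓ.dotProduct_mulVec_pos hm)

variable {K m n : Type*} [Field K] [Fintype m] [Fintype n] [DecidableEq m] [DecidableEq n]
  {A : Matrix m m K} {B : Matrix m n K} {C : Matrix n m K} {D : Matrix n n K}

theorem det_fromBlocks_ne_zero_of_det_ne_zero (hA : A.det ≠ 0) (hS : (D - C * A⁻¹ * B).det ≠ 0) :
    (fromBlocks A B C D).det ≠ 0 := by
  let := A.invertibleOfIsUnitDet hA.isUnit
  rw [det_fromBlocks₁₁, invOf_eq_nonsing_inv]
  exact mul_ne_zero hA hS

theorem inv_fromBlocks_of_det_ne_zero (hA : A.det ≠ 0) (hS : (D - C * A⁻¹ * B).det ≠ 0) :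
    (fromBlocks A B C D)⁻¹ = fromBlocks (A⁻¹ + A⁻¹ * B * (D - C * A⁻¹ * B)⁻¹ * C * A⁻¹)
      (-(A⁻¹ * B * (D - C * A⁻¹ * B)⁻¹)) (-((D - C * A⁻¹ * B)⁻¹ * C * A⁻¹))
      (D - C * A⁻¹ * B)⁻¹ := by
  let := A.invertibleOfIsUnitDet hA.isUnit
  let : Invertible (D - C * ⅟A * B) := by
    rw [invOf_eq_nonsing_inv]; exact invertibleOfIsUnitDet _ hS.isUnit
  let := fromBlocks₁₁Invertible A B C D
  rw [← invOf_eq_nonsing_inv, invOf_fromBlocks₁₁_eq]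
  simp only [invOf_eq_nonsing_inv]

end Matrix

section Decay

variable {d : ℕ}

open scoped Matrix.Norms.Frobenius in
theorem IsPSeq.exists_norm_le_pow {p q : ℕ} {A B P : ℕ → Mat d}
    (hA : ∀ k, k = 0 ∨ p < k → A k = 0) (hP : IsPSeq A B q P) (hcausal : Causal B q) :
    ∃ C r : ℝ, 0 ≤ r ∧ r < 1 ∧ ∀ k, ‖P k‖ ≤ C * r ^ k := by
  let c : Mat d →+* Matrix (Fin d) (Fin d) ℂ := Complex.ofRealHom.mapMatrix
  let b : ℕ → Matrix (Fin d) (Fin d) ℂ :=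
    fun k => if k = 0 then 1 else if k ≤ q then c (B k) else 0
  obtain ⟨C, r, hr0, hr1, hbound⟩ := exists_pow_bound_of_sum_range_mul_eq (N := p + q) (b := b)
    (g := fun k => -c (A k)) (x := fun k => c (P k))
    (fun n hn => by
      simp only [b]; rw [if_neg (show n ≠ 0 by omega), if_neg (show ¬n ≤ q by omega)])
    (fun n hn => by rw [hA n (Or.inr (by omega)), map_zero, neg_zero])
    (fun z hz => by
      have hβ : ∑ n ∈ range (p + q + 1), z ^ n • b n = Bpoly B q z := by
        simp only [b, smul_ite, smul_zero]
        rw [sum_range_ite_eq_add_sum_Icc (Nat.le_add_left q p) (fun k => z ^ k • c (B k))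
          (fun k => z ^ k • 1), pow_zero, one_smul]
        rfl
      rw [hβ, Matrix.isUnit_iff_isUnit_det]
      exact (hcausal z hz).isUnit)
    (fun n => by
      rw [sum_range_ite_mul_eq_add_sum_Icc (fun k => c (B k)) (fun k => c (P k)) (by simp [hP.1])]
      rcases Nat.eq_zero_or_pos n with rfl | hn
      · simp [hP.1, hA 0 (Or.inl rfl)]
      · simpa using congrArg c (hP.2 n hn))
  refine ⟨C, r, hr0, hr1, fun k => ?_⟩
  have := hbound k
  rwa [show c (P k) = (P k).map (↑) from rfl,
    Matrix.frobenius_norm_map_eq _ _ Complex.norm_real] at this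

open scoped Matrix.Norms.Frobenius in
theorem summable_mul_mul_transpose_sub {P : ℕ → Mat d} {C r : ℝ} (hr0 : 0 ≤ r) (hr1 : r < 1)
    (hP : ∀ k, ‖P k‖ ≤ C * r ^ k) (Γ : Mat d) (i j : ℕ) :
    Summable fun t => P (t - i) * Γ * (P (t - j))ᵀ := by
  have hC : 0 ≤ C := by simpa using (norm_nonneg _).trans (hP 0)
  have hgeom : Summable fun t => r ^ (t - i) :=
    (summable_nat_add_iff (f := fun t => r ^ (t - i)) i).mp <| by
      simpa using summable_geometric_of_lt_one hr0 hr1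
  refine (hgeom.mul_left (C * ‖Γ‖ * C)).of_norm_bounded fun t => ?_
  calc ‖P (t - i) * Γ * (P (t - j))ᵀ‖ ≤ ‖P (t - i)‖ * ‖Γ‖ * ‖P (t - j)‖ := by
        grw [Matrix.frobenius_norm_mul, Matrix.frobenius_norm_mul, Matrix.frobenius_norm_transpose]
    _ ≤ C * r ^ (t - i) * ‖Γ‖ * C := by
        gcongr
        · exact hP _
        · exact (hP _).trans (mul_le_of_le_one_right hC (pow_le_one₀ hr0 hr1.le))
    _ = C * ‖Γ‖ * C * r ^ (t - i) := by ring

end Decay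

section Blocks

variable {d : ℕ}

theorem hmat_eq_tsum {P : ℕ → Mat d} (hP0 : P 0 = 0) (Γ : Mat d) {i j : ℕ} (hij : i ≤ j) :
    Hmat P Γ (j - i + 1) = ∑' t, P (t - i) * Γ * (P (t - j))ᵀ := by
  have hsupp : Function.support (fun t => P (t - i) * Γ * (P (t - j))ᵀ)
      ⊆ Set.range (· + (j + 1)) := fun t ht => by
    have : j < t := by
      by_contra! h
      exact ht (by simp [Nat.sub_eq_zero_of_le h, hP0])
    exact ⟨t - (j + 1), Nat.sub_add_cancel this⟩
  rw [Hmat, ← (add_left_injective (j + 1)).tsum_eq hsupp]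
  refine tsum_congr fun m => ?_
  rw [show m + (j + 1) - i = j - i + 1 + m by omega, show m + (j + 1) - j = m + 1 by omega]

theorem hblk_apply {P : ℕ → Mat d} (hP0 : P 0 = 0) {Γ : Mat d} (hΓ : Γᵀ = Γ) {q : ℕ}
    (i j : Fin q) (a b : Fin d) :
    Hblk P Γ q (i, a) (j, b) = (∑' t, P (t - i) * Γ * (P (t - j))ᵀ) a b := by
  by_cases hij : (i : ℕ) ≤ j
  · simp only [Hblk, if_pos hij, hmat_eq_tsum hP0 Γ hij]
  · simp only [Hblk, if_neg hij, hmat_eq_tsum hP0 Γ (le_of_not_ge hij)]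
    have hT : (∑' t, P (t - j) * Γ * (P (t - i))ᵀ)ᵀ = ∑' t, P (t - i) * Γ * (P (t - j))ᵀ := by
      rw [transpose_tsum]
      refine tsum_congr fun t => ?_
      rw [transpose_mul, transpose_mul, transpose_transpose, hΓ, Matrix.mul_assoc]
    exact congrArg (· a b) hT

/-- The block column `X_t = (P_t, P_{t-1}, …, P_{t-q+1})`; truncated subtraction together with
`P 0 = 0` gives the convention `P_m = 0` for `m ≤ 0`. -/
def coeffCol (P : ℕ → Mat d) (q t : ℕ) : Matrix (Fin q × Fin d) (Fin d) ℝ :=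
  Matrix.of fun ia b => P (t - ia.1) ia.2 b

theorem coeffCol_mul_mul_transpose_apply (P : ℕ → Mat d) (Γ : Mat d) (q t : ℕ) (i j : Fin q)
    (a b : Fin d) :
    (coeffCol P q t * Γ * (coeffCol P q t)ᵀ) (i, a) (j, b) = (P (t - i) * Γ * (P (t - j))ᵀ) a b :=
  rfl

theorem summable_coeffCol_mul_mul_transpose {P : ℕ → Mat d} {Γ : Mat d}
    (hsum : ∀ i j : ℕ, Summable fun t => P (t - i) * Γ * (P (t - j))ᵀ) (q : ℕ) :
    Summable fun t => coeffCol P q t * Γ * (coeffCol P q t)ᵀ :=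
  Pi.summable.mpr fun ⟨i, a⟩ => Pi.summable.mpr fun ⟨j, b⟩ =>
    Pi.summable.mp (Pi.summable.mp (hsum i j) a) b

theorem hblk_eq_tsum {P : ℕ → Mat d} (hP0 : P 0 = 0) {Γ : Mat d} (hΓ : Γᵀ = Γ)
    (hsum : ∀ i j : ℕ, Summable fun t => P (t - i) * Γ * (P (t - j))ᵀ) (q : ℕ) :
    Hblk P Γ q = ∑' t, coeffCol P q t * Γ * (coeffCol P q t)ᵀ := by
  ext ⟨i, a⟩ ⟨j, b⟩
  rw [hblk_apply hP0 hΓ, Matrix.tsum_apply (hsum i j),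
    Matrix.tsum_apply (summable_coeffCol_mul_mul_transpose hsum q)]
  rfl

theorem lblk_eq_kronecker (Γ : Mat d) (p : ℕ) :
    Lblk Γ p = (1 : Matrix (Fin p) (Fin p) ℝ) ⊗ₖ Γ := by
  ext ⟨i, a⟩ ⟨j, b⟩
  simp [Lblk, one_apply]

theorem kblk_apply {P : ℕ → Mat d} (hP0 : P 0 = 0) (Γ : Mat d) {p q : ℕ} (i : Fin q) (l : Fin p)
    (a e : Fin d) : Kblk P Γ p q (i, a) (l, e) = (P (l - i) * Γ) a e := by
  by_cases h : (i : ℕ) < l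
  · simp [Kblk, h]
  · simp [Kblk, h, Nat.sub_eq_zero_of_le (not_lt.mp h), hP0]

theorem kblk_mul_inv_lblk {P : ℕ → Mat d} (hP0 : P 0 = 0) {Γ : Mat d} (hΓ : IsUnit Γ.det)
    (p q : ℕ) : Kblk P Γ p q * (Lblk Γ p)⁻¹ = Matrix.of fun ia le => P (le.1 - ia.1) ia.2 le.2 := by
  rw [lblk_eq_kronecker, inv_kronecker, inv_one]
  ext ⟨i, a⟩ ⟨l, e⟩
  simp only [mul_apply, Kblk, kroneckerMap_apply, one_apply, ite_mul, one_mul, zero_mul, mul_ite,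
    mul_zero, Fintype.sum_prod_type, sum_ite_irrel, sum_const_zero, sum_ite_eq', mem_univ,
    ↓reduceIte, of_apply]
  split_ifs with h
  · simp only [← mul_apply, mul_nonsing_inv_cancel_right _ _ hΓ]
  · simp [Nat.sub_eq_zero_of_le (not_lt.mp h), hP0]

theorem kblk_mul_inv_lblk_mul_transpose {P : ℕ → Mat d} (hP0 : P 0 = 0) {Γ : Mat d}
    (hΓ : Γᵀ = Γ) (hdet : IsUnit Γ.det) (p q : ℕ) :
    Kblk P Γ p q * (Lblk Γ p)⁻¹ * (Kblk P Γ p q)ᵀ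
      = ∑ t ∈ range p, coeffCol P q t * Γ * (coeffCol P q t)ᵀ := by
  rw [kblk_mul_inv_lblk hP0 hdet]
  ext ⟨i, a⟩ ⟨j, b⟩
  rw [Matrix.sum_apply, ← Fin.sum_univ_eq_sum_range, mul_apply, Fintype.sum_prod_type]
  refine sum_congr rfl fun l _ => ?_
  rw [coeffCol_mul_mul_transpose_apply, Matrix.mul_assoc, ← hΓ, ← transpose_mul, mul_apply]
  simp only [of_apply, transpose_apply, kblk_apply hP0, hΓ]

theorem schurS_eq_tsum {P : ℕ → Mat d} (hP0 : P 0 = 0) {Γ : Mat d} (hΓ : Γᵀ = Γ)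
    (hdet : IsUnit Γ.det) (hsum : ∀ i j : ℕ, Summable fun t => P (t - i) * Γ * (P (t - j))ᵀ)
    (p q : ℕ) :
    SchurS P Γ p q = ∑' m, coeffCol P q (m + p) * Γ * (coeffCol P q (m + p))ᵀ := by
  rw [SchurS, hblk_eq_tsum hP0 hΓ hsum, kblk_mul_inv_lblk_mul_transpose hP0 hΓ hdet,
    ← (summable_coeffCol_mul_mul_transpose hsum q).sum_add_tsum_nat_add p, add_sub_cancel_left]

theorem vecMul_piMat_apply (P : ℕ → Mat d) (p q : ℕ) (v : Fin q × Fin d → ℝ) (m : Fin q)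
    (b : Fin d) : (v ᵥ* PiMat P p q) (m, b) = (v ᵥ* coeffCol P q (m + p)) b := by
  simp only [vecMul, dotProduct, PiMat, coeffCol, of_apply, add_comm p]

theorem schurS_posDef {P : ℕ → Mat d} (hP0 : P 0 = 0) {Γ : Mat d} (hΓ : Γ.PosDef)
    (hsum : ∀ i j : ℕ, Summable fun t => P (t - i) * Γ * (P (t - j))ᵀ) {p q : ℕ}
    (hPi : (PiMat P p q).det ≠ 0) : (SchurS P Γ p q).PosDef := by
  have hΓT : Γᵀ = Γ := by simpa using hΓ.isHermitian.eq
  rw [schurS_eq_tsum hP0 hΓT hΓ.det_pos.ne'.isUnit hsum]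
  refine posDef_tsum_mul_mul_transpose hΓ
    ((summable_nat_add_iff p).mpr (summable_coeffCol_mul_mul_transpose hsum q)) fun v hv => ?_
  by_contra hv0
  refine hPi (exists_vecMul_eq_zero_iff.mp ⟨v, hv0, funext fun ⟨m, b⟩ => ?_⟩)
  rw [vecMul_piMat_apply, hv]
  rfl

end Blocks

theorem schur_complement_invertible_general
    (d p q : ℕ)
    (A B P : ℕ → Mat d)
    (hA : ∀ k, k = 0 ∨ p < k → A k = 0)
    (hP : IsPSeq A B q P)
    (hA1 : Causal B q)
    (hA2 : (PiMat P p q).det ≠ 0)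
    (Γ : Mat d) (hΓ : Γ.PosDef) :
    (SchurS P Γ p q).det ≠ 0 ∧ (Lam P Γ p q).det ≠ 0 ∧
      (Lam P Γ p q)⁻¹ = Matrix.fromBlocks
        ((Lblk Γ p)⁻¹ + (Lblk Γ p)⁻¹ * (Kblk P Γ p q)ᵀ * (SchurS P Γ p q)⁻¹ *
          Kblk P Γ p q * (Lblk Γ p)⁻¹)
        (-((Lblk Γ p)⁻¹ * (Kblk P Γ p q)ᵀ * (SchurS P Γ p q)⁻¹))
        (-((SchurS P Γ p q)⁻¹ * Kblk P Γ p q * (Lblk Γ p)⁻¹))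
        ((SchurS P Γ p q)⁻¹) := by
  obtain ⟨C, r, hr0, hr1, hPr⟩ := hP.exists_norm_le_pow hA hA1
  have hS : (SchurS P Γ p q).det ≠ 0 :=
    (schurS_posDef hP.1 hΓ (summable_mul_mul_transpose_sub hr0 hr1 hPr Γ) hA2).det_pos.ne'
  have hL : (Lblk Γ p).det ≠ 0 := by
    rw [lblk_eq_kronecker, det_kronecker]
    simp [hΓ.det_pos.ne']
  exact ⟨hS, det_fromBlocks_ne_zero_of_det_ne_zero hL hS, inv_fromBlocks_of_det_ne_zero hL hS⟩

/-- Under causality (A₁) and strong controllability (A₂), the Schur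
complement `S = H - K L⁻¹ Kᵗ` of `L` in `Λ` and `Λ` itself are invertible, and `Λ⁻¹`
is the indicated block matrix. -/
theorem schur_complement_invertible
    (d p q : ℕ) (hd : 0 < d) (hp : 0 < p) (hq : 0 < q)
    (A B P : ℕ → Mat d)
    (hA : ∀ k, k = 0 ∨ p < k → A k = 0) (hB : ∀ k, k = 0 ∨ q < k → B k = 0)
    (hP : IsPSeq A B q P)
    (hA1 : Causal B q)
    (hA2 : (PiMat P p q).det ≠ 0)
    (Γ : Mat d) (hΓ : Γ.PosDef) :
    (SchurS P Γ p q).det ≠ 0 ∧ (Lam P Γ p q).det ≠ 0 ∧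
      (Lam P Γ p q)⁻¹ = Matrix.fromBlocks
        ((Lblk Γ p)⁻¹ + (Lblk Γ p)⁻¹ * (Kblk P Γ p q)ᵀ * (SchurS P Γ p q)⁻¹ *
          Kblk P Γ p q * (Lblk Γ p)⁻¹)
        (-((Lblk Γ p)⁻¹ * (Kblk P Γ p q)ᵀ * (SchurS P Γ p q)⁻¹))
        (-((SchurS P Γ p q)⁻¹ * Kblk P Γ p q * (Lblk Γ p)⁻¹))
        ((SchurS P Γ p q)⁻¹) :=
  schur_complement_invertible_general d p q A B P hA hP hA1 hA2 Γ hΓ
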